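/- arXiv:1505.06139 — 12 statements merged into one kernel-verified Lean document; each statement's English description precedes it below -/
import Mathlib

section
/- A semigroup S is left reversible if and only if every principal right ideal of S is left thick. -/
/-- The principal right ideal `aS¹ = {a} ∪ aS` of a semigroup. -/
def prIdeal {S : Type*} [Semigroup S] (a : S) : Set S :=
  {a} ∪ {x | ∃ s : S, a * s = x}

/-- A subset `E` of a semigroup is left thick if for every finite subset `F`
there is `t` with `F * t ⊆ E`. -/
def LeftThick {S : Type*} [Semigroup S] (E : Set S) : Prop :=
  ∀ F : Finset S, ∃ t : S, ∀ f ∈ F, f * t ∈ E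

/-- A semigroup is left reversible iff every principal right ideal is left thick. -/
theorem leftReversible_iff_prIdeals_leftThick (S : Type*) [Semigroup S] :
    (∀ a b : S, (prIdeal a ∩ prIdeal b).Nonempty) ↔
      (∀ a : S, LeftThick (prIdeal a)) := by
  have key : ∀ (a x u : S), x ∈ prIdeal a → x * u ∈ prIdeal a := by
    intro a x u hx
    rcases hx with h | ⟨s, rfl⟩
    · rw [Set.mem_singleton_iff] at h; subst h
      exact Or.inr ⟨u, rfl⟩
    · exact Or.inr ⟨s * u, (mul_assoc a s u).symm⟩
  constructor
  · intro hrev a F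
    classical
    induction F using Finset.induction_on with
    | empty => exact ⟨a, by simp⟩
    | @insert f F hf ih =>
      obtain ⟨t, ht⟩ := ih
      obtain ⟨x, hxa, hxf⟩ := hrev a (f * t)
      rcases hxf with h | ⟨u, rfl⟩
      · rw [Set.mem_singleton_iff] at h; subst h
        refine ⟨t, fun g hg => ?_⟩
        rcases Finset.mem_insert.mp hg with rfl | hg
        · exact hxa
        · exact ht g hg
      · refine ⟨t * u, fun g hg => ?_⟩
        rcases Finset.mem_insert.mp hg with rfl | hg
        · rw [← mul_assoc]; exact hxa
        · rw [← mul_assoc]; exact key a (g * t) u (ht g hg)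
  · intro hthick a b
    obtain ⟨t, ht⟩ := hthick a {b}
    exact ⟨b * t, ht b (Finset.mem_singleton_self b), Or.inr ⟨t, rfl⟩⟩
end

section
/- In a left reversible semigroup, every right ideal is left thick. -/
/-- A subset `R` of a semigroup is a right ideal if it is nonempty and `RS ⊆ R`. -/
def IsRightIdeal {S : Type*} [Semigroup S] (R : Set S) : Prop :=
  R.Nonempty ∧ ∀ r ∈ R, ∀ s : S, r * s ∈ R

/-- In a left reversible semigroup, every right ideal is left thick. -/
theorem rightIdeal_leftThick_of_leftReversible {S : Type*} [Semigroup S]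
    (hrev : ∀ R₁ R₂ : Set S, IsRightIdeal R₁ → IsRightIdeal R₂ → (R₁ ∩ R₂).Nonempty) :
    ∀ R : Set S, IsRightIdeal R → LeftThick R := by
  intro R hR F
  classical
  induction F using Finset.induction_on with
  | empty =>
    obtain ⟨r, _⟩ := hR.1
    exact ⟨r, by simp⟩
  | @insert a F ha ih =>
    obtain ⟨t, ht⟩ := ih
    -- principal right ideal of a * t
    set P : Set S := {x | x = a * t ∨ ∃ s : S, x = a * t * s} with hP
    have hPideal : IsRightIdeal P := by
      constructor
      · exact ⟨a * t, Or.inl rfl⟩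
      · rintro x (rfl | ⟨s, rfl⟩) s'
        · exact Or.inr ⟨s', rfl⟩
        · exact Or.inr ⟨s * s', by rw [mul_assoc]⟩
    obtain ⟨x, hxP, hxR⟩ := hrev P R hPideal hR
    rcases hxP with h | ⟨s, h⟩
    · refine ⟨t, ?_⟩
      intro f hf
      rcases Finset.mem_insert.mp hf with rfl | hf
      · rwa [← h]
      · exact ht f hf
    · refine ⟨t * s, ?_⟩
      intro f hf
      rcases Finset.mem_insert.mp hf with rfl | hf
      · rw [← mul_assoc, ← h]; exact hxR
      · rw [← mul_assoc]; exact hR.2 _ (ht f hf) s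
end

section
/- If S is a left reversible semigroup and f₁, ..., fₙ ∈ S and a ∈ S, then there exist t₁, ..., tₙ ∈ S such that fᵢ t₁ t₂ ⋯ tₙ ∈ aS for all i = 1, ..., n. -/
private lemma foldl_mul_aux {S : Type*} [Semigroup S] (a : S) :
    ∀ (l : List S) (p s g : S), g * p = a * s →
      g * l.foldl (· * ·) p = a * l.foldl (· * ·) s := by
  intro l
  induction l with
  | nil => intro p s g h; simpa using h
  | cons x xs ih =>
      intro p s g h
      simp only [List.foldl_cons]
      exact ih (p * x) (s * x) g (by rw [← mul_assoc, h, mul_assoc])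

private lemma exists_common_aux {S : Type*} [Semigroup S]
    (hrev : ∀ x y : S, ∃ u v : S, x * u = y * v) (a : S) :
    ∀ (n : ℕ) (f : Fin (n + 1) → S), ∃ p : S, ∀ i, ∃ s : S, f i * p = a * s := by
  intro n
  induction n with
  | zero =>
      intro f
      obtain ⟨u, v, h⟩ := hrev (f 0) a
      exact ⟨u, fun i => ⟨v, by rw [Fin.eq_zero i]; exact h⟩⟩
  | succ n ih =>
      intro f
      obtain ⟨p, hp⟩ := ih (fun i => f i.castSucc)
      obtain ⟨u, v, h⟩ := hrev (f (Fin.last _) * p) a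
      refine ⟨p * u, fun i => ?_⟩
      refine Fin.lastCases ?_ (fun j => ?_) i
      · exact ⟨v, by rw [← mul_assoc]; exact h⟩
      · obtain ⟨s, hs⟩ := hp j
        exact ⟨s * u, by rw [← mul_assoc, hs, mul_assoc]⟩

/-- If `S` is left reversible (all principal right ideals `xS`, `yS` intersect),
`f₁, …, fₙ ∈ S` and `a ∈ S`, then there exist `t₁, …, tₙ` such that
`fᵢ t₁ t₂ ⋯ tₙ ∈ aS` for all `i`. -/
theorem exists_chain_into_principal_right_ideal {S : Type*} [Semigroup S]
    (hrev : ∀ x y : S, ∃ u v : S, x * u = y * v)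
    (n : ℕ) (f : Fin (n + 1) → S) (a : S) :
    ∃ t : Fin (n + 1) → S, ∀ i : Fin (n + 1), ∃ s : S,
      f i * ((List.ofFn fun j : Fin n => t j.succ).foldl (· * ·) (t 0)) = a * s := by
  obtain ⟨p, hp⟩ := exists_common_aux hrev a n f
  refine ⟨fun _ => p, fun i => ?_⟩
  obtain ⟨s, hs⟩ := hp i
  exact ⟨(List.ofFn fun _ : Fin n => p).foldl (· * ·) s,
    foldl_mul_aux a _ p s (f i) hs⟩
end

section
/- Let S be a left reversible semigroup in which every two-sided ideal contains an idempotent. Then S is near left cancellative. -/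
/-- A subset `I` of a semigroup is a two-sided ideal. -/
def IsTwoSidedIdeal {S : Type*} [Semigroup S] (I : Set S) : Prop :=
  I.Nonempty ∧ (∀ s : S, ∀ i ∈ I, s * i ∈ I) ∧ (∀ s : S, ∀ i ∈ I, i * s ∈ I)

/-- A semigroup is near left cancellative. -/
def NearLeftCancellative (S : Type*) [Semigroup S] : Prop :=
  ∀ s : S, ∃ E : Set S, LeftThick E ∧ ∀ x ∈ E, ∀ y ∈ E, s * x = s * y → x = y

/-- The principal right ideal generated by `c`. -/
def genR {S : Type*} [Semigroup S] (c : S) : Set S :=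
  {x | x = c ∨ ∃ u, x = c * u}

lemma genR_isRightIdeal {S : Type*} [Semigroup S] (c : S) : IsRightIdeal (genR c) := by
  refine ⟨⟨c, Or.inl rfl⟩, ?_⟩
  rintro r (rfl | ⟨u, rfl⟩) t
  · exact Or.inr ⟨t, rfl⟩
  · exact Or.inr ⟨u * t, (mul_assoc _ _ _)⟩

lemma genR_leftThick {S : Type*} [Semigroup S]
    (hrev : ∀ R₁ R₂ : Set S, IsRightIdeal R₁ → IsRightIdeal R₂ → (R₁ ∩ R₂).Nonempty)
    (c : S) : LeftThick (genR c) := by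
  intro F
  classical
  induction F using Finset.induction_on with
  | empty => exact ⟨c, by simp⟩
  | @insert g F' hg ih =>
    obtain ⟨t, ht⟩ := ih
    obtain ⟨z, hz1, hz2⟩ := hrev (genR (g * t)) (genR c)
      (genR_isRightIdeal _) (genR_isRightIdeal _)
    rcases hz1 with rfl | ⟨u, rfl⟩
    · exact ⟨t, by
        intro f hf
        rcases Finset.mem_insert.mp hf with rfl | hf
        · exact hz2
        · exact ht f hf⟩
    · refine ⟨t * u, ?_⟩
      intro f hf
      rcases Finset.mem_insert.mp hf with rfl | hf
      · rw [← mul_assoc]; exact hz2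
      · rw [← mul_assoc]
        exact (genR_isRightIdeal c).2 _ (ht f hf) u

/-- A left reversible semigroup in which every two-sided ideal contains an
idempotent is near left cancellative. -/
theorem nearLeftCancellative_of_ideals_have_idempotents {S : Type*} [Semigroup S]
    (hrev : ∀ R₁ R₂ : Set S, IsRightIdeal R₁ → IsRightIdeal R₂ → (R₁ ∩ R₂).Nonempty)
    (hidpt : ∀ I : Set S, IsTwoSidedIdeal I → ∃ e ∈ I, e * e = e) :
    NearLeftCancellative S := by
  intro s
  -- the two-sided ideal Ss ∪ SsS
  set I : Set S := {x | (∃ a, x = a * s) ∨ ∃ a b, x = a * s * b} with hI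
  have hIdeal : IsTwoSidedIdeal I := by
    refine ⟨⟨s * s, Or.inl ⟨s, rfl⟩⟩, ?_, ?_⟩
    · rintro t x (⟨a, rfl⟩ | ⟨a, b, rfl⟩)
      · exact Or.inl ⟨t * a, (mul_assoc _ _ _).symm⟩
      · exact Or.inr ⟨t * a, b, by rw [mul_assoc t a s, ← mul_assoc t (a*s) b]⟩
    · rintro t x (⟨a, rfl⟩ | ⟨a, b, rfl⟩)
      · exact Or.inr ⟨a, t, rfl⟩
      · exact Or.inr ⟨a, b * t, mul_assoc _ _ _⟩
  obtain ⟨e, heI, hee⟩ := hidpt I hIdeal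
  -- find c and a retraction of left multiplication by s on genR c
  suffices h : ∃ c : S, ∀ z ∈ genR c, ∀ w ∈ genR c, s * z = s * w → z = w by
    obtain ⟨c, hc⟩ := h
    exact ⟨genR c, genR_leftThick hrev c, hc⟩
  rcases heI with ⟨a, rfl⟩ | ⟨a, b, rfl⟩
  · -- e = a * s ; c = e ; a * (s * z) = z for z ∈ genR e
    refine ⟨a * s, ?_⟩
    have key : ∀ z ∈ genR (a * s), a * (s * z) = z := by
      rintro z (rfl | ⟨u, rfl⟩)
      · rw [← mul_assoc]; exact hee
      · rw [← mul_assoc, ← mul_assoc, hee]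
    intro z hz w hw hsw
    rw [← key z hz, ← key w hw, hsw]
  · -- e = a * s * b ; c = b * e
    refine ⟨b * (a * s * b), ?_⟩
    set e := a * s * b with he
    have key : ∀ z ∈ genR (b * e), b * (a * (s * z)) = z := by
      rintro z (rfl | ⟨u, rfl⟩)
      · have : a * (s * (b * e)) = e := by
          rw [← mul_assoc, ← mul_assoc]; exact hee
        rw [this]
      · have : a * (s * (b * e * u)) = e * u := by
          rw [show b * e * u = b * (e * u) from mul_assoc _ _ _,
            ← mul_assoc, ← mul_assoc, ← mul_assoc]
          rw [show a * s * b * e * u = (a * s * b * e) * u from rfl, hee]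
        rw [this, ← mul_assoc]
    intro z hz w hw hsw
    rw [← key z hz, ← key w hw, hsw]
end

section
/- Every near left cancellative semigroup satisfies the Klawe condition. -/
/-- Every near left cancellative semigroup satisfies the Klawe condition. -/
theorem klawe_of_nearLeftCancellative {S : Type*} [Semigroup S]
    (h : NearLeftCancellative S) :
    ∀ s x y : S, s * x = s * y → ∃ t : S, x * t = y * t := by
  intro s x y hxy
  obtain ⟨E, hE, hcanc⟩ := h s
  classical
  obtain ⟨t, ht⟩ := hE {x, y}
  refine ⟨t, hcanc _ (ht x (by simp)) _ (ht y (by simp)) ?_⟩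
  rw [← mul_assoc, ← mul_assoc, hxy]
end

section
/- Let S be a left reversible semigroup, so that the relation x ≅ y (defined by: there exists s ∈ S with xs = ys) is a congruence on S. Then S satisfies the Klawe condition if and only if the quotient semigroup S/≅ is left cancellative. -/
/-- For a left reversible semigroup `S`, the relation `x ≅ y` iff `∃ s, xs = ys`
is a congruence and the quotient `S/≅` is a semigroup.  `S` satisfies the
Klawe condition iff `S/≅` is left cancellative; left cancellativity of the
quotient is expressed on representatives:
`[a][x] = [a][y] → [x] = [y]`, i.e. `(∃ s, (a*x)*s = (a*y)*s) → ∃ s, x*s = y*s`. -/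
theorem klawe_iff_quotient_leftCancellative {S : Type*} [Semigroup S]
    (hrev : ∀ R₁ R₂ : Set S, IsRightIdeal R₁ → IsRightIdeal R₂ → (R₁ ∩ R₂).Nonempty) :
    (∀ s x y : S, s * x = s * y → ∃ t : S, x * t = y * t) ↔
      (∀ a x y : S, (∃ s : S, (a * x) * s = (a * y) * s) → ∃ s : S, x * s = y * s) := by
  constructor
  · rintro hK a x y ⟨s, hs⟩
    rw [mul_assoc, mul_assoc] at hs
    obtain ⟨t, ht⟩ := hK a (x * s) (y * s) hs
    exact ⟨s * t, by rw [← mul_assoc, ← mul_assoc, ht]⟩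
  · intro hQ s x y h
    exact hQ s x y ⟨s, by rw [h]⟩
end

section
/- A semigroup S satisfies the strong Følner condition if and only if for every finite set F ⊆ S and every ε > 0 there is a nonempty finite set X ⊆ S such that for each f ∈ F: |fX \ X| ≤ ε|X| and left translation by f restricted to X is injective (fx = fy with x, y ∈ X implies x = y). -/
open Finset

/-- Counting lemma: the set of points of `A` on which `g` collides with another
point of `A` has cardinality at most `2 * (|A| - |g(A)|)`. -/
lemma bad_bound {S : Type*} [DecidableEq S] (A : Finset S) (g : S → S) :
    (A.filter (fun a => ∃ a' ∈ A, a' ≠ a ∧ g a' = g a)).card + 2 * (A.image g).card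
      ≤ 2 * A.card := by
  classical
  set bad := A.filter (fun a => ∃ a' ∈ A, a' ≠ a ∧ g a' = g a) with hbad
  have hbadsub : bad ⊆ A := filter_subset _ _
  set good := A \ bad with hgood
  have himg : A.image g ⊆ good.image g ∪ bad.image g := by
    intro b hb
    obtain ⟨a, ha, rfl⟩ := mem_image.1 hb
    by_cases h : a ∈ bad
    · exact mem_union_right _ (mem_image_of_mem _ h)
    · exact mem_union_left _ (mem_image_of_mem _ (mem_sdiff.2 ⟨ha, h⟩))
  have hinjgood : Set.InjOn g good := by
    intro a ha b hb hab
    by_contra hne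
    have : a ∈ bad := mem_filter.2 ⟨(mem_sdiff.1 ha).1, ⟨b, (mem_sdiff.1 hb).1,
      fun h => hne h.symm, hab.symm⟩⟩
    exact (mem_sdiff.1 ha).2 this
  have hgoodcard : (good.image g).card = good.card :=
    card_image_of_injOn hinjgood
  have hfiber : ∀ b ∈ bad.image g, 2 ≤ (bad.filter (fun a => g a = b)).card := by
    intro b hb
    obtain ⟨a, ha, rfl⟩ := mem_image.1 hb
    obtain ⟨-, a', ha', hne, heq⟩ := mem_filter.1 ha
    have ha'bad : a' ∈ bad := mem_filter.2 ⟨ha', ⟨a, (mem_filter.1 ha).1,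
      fun h => hne h.symm, heq.symm⟩⟩
    have h1 : a ∈ bad.filter (fun x => g x = g a) := mem_filter.2 ⟨ha, rfl⟩
    have h2 : a' ∈ bad.filter (fun x => g x = g a) := mem_filter.2 ⟨ha'bad, heq⟩
    exact one_lt_card.2 ⟨a', h2, a, h1, hne⟩
  have hbadimg : 2 * (bad.image g).card ≤ bad.card := by
    calc 2 * (bad.image g).card = ∑ _b ∈ bad.image g, 2 := by
          rw [Finset.sum_const, smul_eq_mul, mul_comm]
      _ ≤ ∑ b ∈ bad.image g, (bad.filter (fun a => g a = b)).card :=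
          Finset.sum_le_sum hfiber
      _ = bad.card := (Finset.card_eq_sum_card_image g bad).symm
  have h1 : (A.image g).card ≤ good.card + (bad.image g).card := by
    calc (A.image g).card ≤ (good.image g ∪ bad.image g).card := card_le_card himg
      _ ≤ (good.image g).card + (bad.image g).card := card_union_le _ _
      _ = good.card + (bad.image g).card := by rw [hgoodcard]
  have h2 : good.card + bad.card = A.card := card_sdiff_add_card_eq_card hbadsub
  omega

/-- `|g(A) \ A| ≤ |A \ g(A)|` for any `g`. -/
lemma image_sdiff_le {S : Type*} [DecidableEq S] (A : Finset S) (g : S → S) :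
    (A.image g \ A).card ≤ (A \ A.image g).card := by
  have h1 : (A.image g \ A).card + (A.image g ∩ A).card = (A.image g).card :=
    card_sdiff_add_card_inter _ _
  have h2 : (A \ A.image g).card + (A ∩ A.image g).card = A.card :=
    card_sdiff_add_card_inter _ _
  have h3 : (A.image g ∩ A).card = (A ∩ A.image g).card := by rw [inter_comm]
  have h4 : (A.image g).card ≤ A.card := card_image_le
  omega

/-- The strong Følner condition for a semigroup. -/
def SFC (S : Type*) [Semigroup S] [DecidableEq S] : Prop :=
  ∀ H : Finset S, ∀ ε : ℝ, 0 < ε → ∃ A : Finset S, A.Nonempty ∧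
    ∀ s ∈ H, ((A \ A.image (s * ·)).card : ℝ) ≤ ε * A.card

/-- A semigroup satisfies SFC iff for every finite `F` and `ε > 0` there is a
nonempty finite `X` with `|fX \ X| ≤ ε|X|` for each `f ∈ F` on which each
`f ∈ F` acts injectively by left translation. -/
theorem sfc_iff_injective_weak_folner (S : Type*) [Semigroup S] [DecidableEq S] :
    SFC S ↔
      ∀ F : Finset S, ∀ ε : ℝ, 0 < ε → ∃ X : Finset S, X.Nonempty ∧
        ∀ f ∈ F, ((X.image (f * ·) \ X).card : ℝ) ≤ ε * X.card ∧
          (∀ x ∈ X, ∀ y ∈ X, f * x = f * y → x = y) := by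
  classical
  constructor
  · -- forward direction
    intro hSFC F ε hε
    set n : ℕ := F.card with hn
    set δ : ℝ := min ε 1 / (4 * n + 4) with hδdef
    have hden : (0:ℝ) < 4 * n + 4 := by positivity
    have hδpos : 0 < δ := by
      apply div_pos (lt_min hε one_pos) hden
    obtain ⟨A, hAne, hA⟩ := hSFC F δ hδpos
    set B : Finset S := F.biUnion
      (fun f => A.filter (fun a => ∃ a' ∈ A, a' ≠ a ∧ f * a' = f * a)) with hB
    have hBsub : B ⊆ A := by
      intro x hx
      obtain ⟨f, -, hx⟩ := mem_biUnion.1 hx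
      exact (mem_filter.1 hx).1
    -- bound on |B|
    have hBcard : (B.card : ℝ) ≤ 2 * n * δ * A.card := by
      have hstep : ∀ f ∈ F,
          ((A.filter (fun a => ∃ a' ∈ A, a' ≠ a ∧ f * a' = f * a)).card : ℝ)
            ≤ 2 * δ * A.card := by
        intro f hf
        have hbb := bad_bound A (f * ·)
        have hsub : A.card ≤ (A.image (f * ·)).card + (A \ A.image (f * ·)).card := by
          have h2 : (A \ A.image (f * ·)).card + (A ∩ A.image (f * ·)).card = A.card :=
            card_sdiff_add_card_inter _ _
          have h3 : (A ∩ A.image (f * ·)).card ≤ (A.image (f * ·)).card :=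
            card_le_card (inter_subset_right)
          omega
        have hnat : (A.filter (fun a => ∃ a' ∈ A, a' ≠ a ∧ f * a' = f * a)).card
            ≤ 2 * (A \ A.image (f * ·)).card := by omega
        calc ((A.filter (fun a => ∃ a' ∈ A, a' ≠ a ∧ f * a' = f * a)).card : ℝ)
            ≤ 2 * ((A \ A.image (f * ·)).card : ℝ) := by exact_mod_cast hnat
          _ ≤ 2 * (δ * A.card) := by
              have := hA f hf
              linarith
          _ = 2 * δ * A.card := by ring
      calc (B.card : ℝ) ≤ ∑ f ∈ F,
            ((A.filter (fun a => ∃ a' ∈ A, a' ≠ a ∧ f * a' = f * a)).card : ℝ) := by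
            exact_mod_cast Finset.card_biUnion_le
        _ ≤ ∑ _f ∈ F, 2 * δ * A.card := Finset.sum_le_sum hstep
        _ = n * (2 * δ * A.card) := by rw [Finset.sum_const, nsmul_eq_mul, hn]
        _ = 2 * n * δ * A.card := by ring
    set X : Finset S := A \ B with hX
    have hXcardnat : X.card + B.card = A.card := card_sdiff_add_card_eq_card hBsub
    -- |X| ≥ |A| / 2
    have hδ1 : δ ≤ 1 / (4 * n + 4) := by
      rw [hδdef]; gcongr; exact min_le_right _ _
    have h2nδ : 2 * (n:ℝ) * δ ≤ 1 / 2 := by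
      have h1 : 2 * (n:ℝ) * δ ≤ 2 * n * (1 / (4 * n + 4)) := by
        apply mul_le_mul_of_nonneg_left hδ1
        positivity
      have h2 : 2 * (n:ℝ) * (1 / (4 * n + 4)) ≤ 1 / 2 := by
        rw [mul_one_div, div_le_div_iff₀ hden (by norm_num)]
        push_cast
        nlinarith [Nat.cast_nonneg (α := ℝ) n]
      linarith
    have hAcard0 : (0:ℝ) < A.card := by exact_mod_cast card_pos.2 hAne
    have hXcard : (A.card : ℝ) ≤ 2 * X.card := by
      have h1 : (X.card : ℝ) + B.card = A.card := by exact_mod_cast hXcardnat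
      have h2 : (B.card : ℝ) ≤ (1/2) * A.card := by
        calc (B.card : ℝ) ≤ 2 * n * δ * A.card := hBcard
          _ ≤ (1/2) * A.card := by
              apply mul_le_mul_of_nonneg_right h2nδ hAcard0.le
      linarith
    have hXne : X.Nonempty := by
      rw [← card_pos]
      have : (0:ℝ) < X.card := by linarith
      exact_mod_cast this
    refine ⟨X, hXne, fun f hf => ?_⟩
    constructor
    · -- Følner estimate
      have hsub : X.image (f * ·) \ X ⊆ (A.image (f * ·) \ A) ∪ B := by
        intro b hb
        obtain ⟨hbi, hbx⟩ := mem_sdiff.1 hb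
        obtain ⟨x, hx, rfl⟩ := mem_image.1 hbi
        have hxA : x ∈ A := (mem_sdiff.1 hx).1
        by_cases h : f * x ∈ A
        · exact mem_union_right _ (by
            by_contra hc
            exact hbx (mem_sdiff.2 ⟨h, hc⟩))
        · exact mem_union_left _ (mem_sdiff.2 ⟨mem_image_of_mem _ hxA, h⟩)
      have hcard1 : (X.image (f * ·) \ X).card ≤ (A.image (f * ·) \ A).card + B.card :=
        (card_le_card hsub).trans (card_union_le _ _)
      have hcard2 : (A.image (f * ·) \ A).card ≤ (A \ A.image (f * ·)).card :=
        image_sdiff_le A _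
      have hfA : ((A \ A.image (f * ·)).card : ℝ) ≤ δ * A.card := hA f hf
      have hδε : (2 * n + 1) * δ * 2 ≤ ε := by
        have h1 : δ ≤ ε / (4 * n + 4) := by
          rw [hδdef]; gcongr; exact min_le_left _ _
        have h2 : (2 * (n:ℝ) + 1) * 2 * (ε / (4 * n + 4)) ≤ ε := by
          rw [mul_div_assoc', div_le_iff₀ hden]
          nlinarith [Nat.cast_nonneg (α := ℝ) n]
        nlinarith [Nat.cast_nonneg (α := ℝ) n, hε.le]
      calc ((X.image (f * ·) \ X).card : ℝ)
          ≤ ((A.image (f * ·) \ A).card : ℝ) + B.card := by exact_mod_cast hcard1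
        _ ≤ ((A \ A.image (f * ·)).card : ℝ) + B.card := by
            have : ((A.image (f * ·) \ A).card : ℝ) ≤ ((A \ A.image (f * ·)).card : ℝ) := by
              exact_mod_cast hcard2
            linarith
        _ ≤ δ * A.card + 2 * n * δ * A.card := by linarith
        _ = (2 * n + 1) * δ * A.card := by ring
        _ ≤ (2 * n + 1) * δ * (2 * X.card) := by
            apply mul_le_mul_of_nonneg_left hXcard
            positivity
        _ = ((2 * n + 1) * δ * 2) * X.card := by ring
        _ ≤ ε * X.card := by
            apply mul_le_mul_of_nonneg_right hδε
            positivity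
    · -- injectivity
      intro x hx y hy hxy
      by_contra hne
      have hxA : x ∈ A := (mem_sdiff.1 hx).1
      have hyA : y ∈ A := (mem_sdiff.1 hy).1
      have : x ∈ B := mem_biUnion.2 ⟨f, hf, mem_filter.2 ⟨hxA, ⟨y, hyA,
        fun h => hne h.symm, hxy.symm⟩⟩⟩
      exact (mem_sdiff.1 hx).2 this
  · -- reverse direction
    intro h H ε hε
    obtain ⟨X, hXne, hX⟩ := h H ε hε
    refine ⟨X, hXne, fun s hs => ?_⟩
    obtain ⟨h1, h2⟩ := hX s hs
    have hinj : Set.InjOn (s * ·) X := fun x hx y hy => h2 x hx y hy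
    have himg : (X.image (s * ·)).card = X.card := card_image_of_injOn hinj
    have ha : (X \ X.image (s * ·)).card + (X ∩ X.image (s * ·)).card = X.card :=
      card_sdiff_add_card_inter _ _
    have hb : (X.image (s * ·) \ X).card + (X.image (s * ·) ∩ X).card
        = (X.image (s * ·)).card := card_sdiff_add_card_inter _ _
    have hc : (X ∩ X.image (s * ·)).card = (X.image (s * ·) ∩ X).card := by
      rw [inter_comm]
    have heq : (X \ X.image (s * ·)).card = (X.image (s * ·) \ X).card := by omega
    rw [heq]
    exact_mod_cast h1
end

section
/- Let S be a semigroup satisfying SFC, let F ⊆ S be finite, and let μ > 0. Suppose A ⊆ S is a nonempty finite set with |fA \ A| < μ|A| and |A \ fA| < μ|A| for all f ∈ F. Let B = {a ∈ A : there is no f ∈ F and b ∈ A with b ≠ a and fb = fa}. Then |A \ B| ≤ 2|F|μ|A|. -/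
lemma collision_card_aux {S : Type*} [DecidableEq S] (A : Finset S) (g : S → S) :
    (A.filter (fun a => ∃ b ∈ A, b ≠ a ∧ g b = g a)).card + 2 * (A.image g).card
      ≤ 2 * A.card := by
  classical
  set C := A.filter (fun a => ∃ b ∈ A, b ≠ a ∧ g b = g a) with hCdef
  have hCsub : C ⊆ A := Finset.filter_subset _ _
  have hCcard : C.card = ∑ y ∈ A.image g, (C.filter (fun a => g a = y)).card := by
    apply Finset.card_eq_sum_card_fiberwise
    intro a ha
    exact Finset.mem_image_of_mem g (hCsub ha)
  have hAcard : A.card = ∑ y ∈ A.image g, (A.filter (fun a => g a = y)).card := by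
    apply Finset.card_eq_sum_card_fiberwise
    intro a ha
    exact Finset.mem_image_of_mem g ha
  have h2img : 2 * (A.image g).card = ∑ _y ∈ A.image g, 2 := by
    simp [Finset.sum_const, mul_comm]
  rw [hCcard, hAcard, h2img, ← Finset.sum_add_distrib, Finset.mul_sum]
  apply Finset.sum_le_sum
  intro y hy
  have hay : 1 ≤ (A.filter (fun a => g a = y)).card := by
    obtain ⟨a, ha, rfl⟩ := Finset.mem_image.mp hy
    exact Finset.card_pos.mpr ⟨a, Finset.mem_filter.mpr ⟨ha, rfl⟩⟩
  rcases Finset.eq_empty_or_nonempty (C.filter (fun a => g a = y)) with he | hne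
  · simp only [he, Finset.card_empty, zero_add]; omega
  · obtain ⟨a, haf⟩ := hne
    obtain ⟨haC, hay'⟩ := Finset.mem_filter.mp haf
    obtain ⟨haA, b, hbA, hba, hgb⟩ := Finset.mem_filter.mp haC
    have h2 : 2 ≤ (A.filter (fun a => g a = y)).card := by
      have : ({b, a} : Finset S) ⊆ A.filter (fun a => g a = y) := by
        intro x hx
        rcases Finset.mem_insert.mp hx with rfl | hx
        · exact Finset.mem_filter.mpr ⟨hbA, hgb.trans hay'⟩
        · rw [Finset.mem_singleton] at hx; subst hx
          exact Finset.mem_filter.mpr ⟨haA, hay'⟩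
      calc 2 = ({b, a} : Finset S).card := (Finset.card_pair hba).symm
        _ ≤ _ := Finset.card_le_card this
    have hle : (C.filter (fun a => g a = y)).card ≤ (A.filter (fun a => g a = y)).card :=
      Finset.card_le_card (Finset.filter_subset_filter _ hCsub)
    omega

/-- Let `S` satisfy SFC, `F ⊆ S` finite, `μ > 0`, and let `A` be a nonempty
finite set with `|fA \ A| < μ|A|` and `|A \ fA| < μ|A|` for all `f ∈ F`.
If `B` is the set of elements of `A` forming singleton fibres under left
translation by each element of `F`, then `|A \ B| ≤ 2|F|μ|A|`. -/
theorem card_diff_singleton_fibres {S : Type*} [Semigroup S] [DecidableEq S]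
    (hsfc : SFC S) (F : Finset S) (μ : ℝ) (hμ : 0 < μ)
    (A : Finset S) (hA : A.Nonempty)
    (h₁ : ∀ f ∈ F, ((A.image (f * ·) \ A).card : ℝ) < μ * A.card)
    (h₂ : ∀ f ∈ F, ((A \ A.image (f * ·)).card : ℝ) < μ * A.card)
    (B : Finset S)
    (hB : ∀ a : S, a ∈ B ↔ a ∈ A ∧ ¬ ∃ f ∈ F, ∃ b ∈ A, b ≠ a ∧ f * b = f * a) :
    ((A \ B).card : ℝ) ≤ 2 * F.card * μ * A.card := by
  classical
  set C : S → Finset S := fun f => A.filter (fun a => ∃ b ∈ A, b ≠ a ∧ f * b = f * a) with hC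
  have hsub : A \ B ⊆ F.biUnion C := by
    intro a ha
    obtain ⟨haA, haB⟩ := Finset.mem_sdiff.mp ha
    have := (hB a).not.mp haB
    push_neg at this
    obtain ⟨f, hf, b, hbA, hba, hfb⟩ := this haA
    exact Finset.mem_biUnion.mpr ⟨f, hf, Finset.mem_filter.mpr ⟨haA, b, hbA, hba, hfb⟩⟩
  have key : ∀ f ∈ F, ((C f).card : ℝ) ≤ 2 * μ * A.card := by
    intro f hf
    have h : (C f).card + 2 * (A.image (f * ·)).card ≤ 2 * A.card := collision_card_aux A (f * ·)
    -- |A| ≤ |A \ fA| + |fA|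
    have himg : A.card ≤ (A \ A.image (f * ·)).card + (A.image (f * ·)).card := by
      have := Finset.card_le_card_sdiff_add_card (s := A) (t := A.image (f * ·))
      simpa using this
    have hmu := h₂ f hf
    have : ((C f).card : ℝ) ≤ 2 * ((A \ A.image (f * ·)).card : ℝ) := by
      have : (C f).card ≤ 2 * (A \ A.image (f * ·)).card := by omega
      exact_mod_cast this
    nlinarith [hmu, this]
  calc ((A \ B).card : ℝ) ≤ ((F.biUnion C).card : ℝ) := by
        exact_mod_cast Finset.card_le_card hsub
    _ ≤ ∑ f ∈ F, ((C f).card : ℝ) := by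
        exact_mod_cast Finset.card_biUnion_le
    _ ≤ ∑ f ∈ F, 2 * μ * A.card := Finset.sum_le_sum key
    _ = 2 * F.card * μ * A.card := by rw [Finset.sum_const]; push_cast; ring
end

section
/- Let a, b be elements of a semigroup S satisfying the Klawe condition. Then either aS ∩ bS is nonempty, or a and b freely generate a free subsemigroup of rank 2 (i.e., the natural homomorphism from the free semigroup on two generators to S sending the generators to a and b is injective). -/
section KlaweAux

variable {S : Type*} [Semigroup S]

private def klaweG (f : Bool → S) (c : Bool) (l : List Bool) : S :=
  FreeSemigroup.lift f ⟨c, l⟩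

private lemma klaweG_nil (f : Bool → S) (c : Bool) : klaweG f c [] = f c := rfl

private lemma klaweG_cons (f : Bool → S) (c d : Bool) (l : List Bool) :
    klaweG f c (d :: l) = f c * klaweG f d l := by
  have : (⟨c, d :: l⟩ : FreeSemigroup Bool) = FreeSemigroup.of c * ⟨d, l⟩ := rfl
  rw [klaweG, this, map_mul, FreeSemigroup.lift_of, klaweG]

private lemma klaweG_append (f : Bool → S) (c : Bool) (l : List Bool) (d : Bool)
    (m : List Bool) : klaweG f c (l ++ d :: m) = klaweG f c l * klaweG f d m := by
  have : (⟨c, l ++ d :: m⟩ : FreeSemigroup Bool) = (⟨c, l⟩ : FreeSemigroup Bool) * ⟨d, m⟩ := rfl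
  rw [klaweG, this, map_mul]; rfl

private lemma klaweG_factor (f : Bool → S) (c : Bool) (l : List Bool) (t : S) :
    ∃ Z : S, klaweG f c l * t = f c * Z := by
  cases l with
  | nil => exact ⟨t, rfl⟩
  | cons d m => exact ⟨klaweG f d m * t, by rw [klaweG_cons, mul_assoc]⟩

/-- longest common prefix decomposition for distinct lists -/
private lemma klawe_list_decomp : ∀ (L₁ L₂ : List Bool), L₁ ≠ L₂ →
    ∃ p s₁ s₂, L₁ = p ++ s₁ ∧ L₂ = p ++ s₂ ∧
      ((∃ c t₁ d t₂, s₁ = c :: t₁ ∧ s₂ = d :: t₂ ∧ c ≠ d) ∨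
        (s₁ = [] ∧ s₂ ≠ []) ∨ (s₁ ≠ [] ∧ s₂ = [])) := by
  intro L₁
  induction L₁ with
  | nil => intro L₂ h; exact ⟨[], [], L₂, rfl, rfl, Or.inr (Or.inl ⟨rfl, fun hh => h hh.symm⟩)⟩
  | cons c t₁ ih =>
    intro L₂ h
    cases L₂ with
    | nil => exact ⟨[], c :: t₁, [], rfl, rfl, Or.inr (Or.inr ⟨by simp, rfl⟩)⟩
    | cons d t₂ =>
      by_cases hcd : c = d
      · subst hcd
        have ht : t₁ ≠ t₂ := fun hh => h (by rw [hh])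
        obtain ⟨p, s₁, s₂, h1, h2, h3⟩ := ih t₂ ht
        exact ⟨c :: p, s₁, s₂, by simp [h1], by simp [h2], h3⟩
      · exact ⟨[], c :: t₁, d :: t₂, rfl, rfl, Or.inl ⟨c, t₁, d, t₂, rfl, rfl, hcd⟩⟩

end KlaweAux

/-- If `S` satisfies the Klawe condition and `a, b ∈ S`, then either
`aS ∩ bS ≠ ∅`, or `a` and `b` freely generate a free subsemigroup of rank 2. -/
theorem klawe_dichotomy_elements {S : Type*} [Semigroup S]
    (hklawe : ∀ s x y : S, s * x = s * y → ∃ t : S, x * t = y * t)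
    (a b : S) :
    (∃ u v : S, a * u = b * v) ∨
      Function.Injective
        ⇑(FreeSemigroup.lift (fun c : Bool => if c then a else b) :
            FreeSemigroup Bool →ₙ* S) := by
  rw [or_iff_not_imp_left]
  intro hP
  set f : Bool → S := fun c : Bool => if c then a else b with hf
  -- cross product impossible
  have hcross : ∀ (c d : Bool) (X Y : S), c ≠ d → f c * X = f d * Y → False := by
    intro c d X Y hne h
    cases c <;> cases d
    · exact hne rfl
    · have h' : b * X = a * Y := by simpa [hf] using h
      exact hP ⟨Y, X, h'.symm⟩
    · have h' : a * X = b * Y := by simpa [hf] using h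
      exact hP ⟨X, Y, h'⟩
    · exact hne rfl
  -- a = b impossible
  have heq : ∀ c d : Bool, c ≠ d → f c = f d → False := by
    intro c d hne h
    exact hcross c d a a hne (by rw [h])
  -- f c = f d * X with c ≠ d impossible
  have hsingle : ∀ (c d : Bool) (X : S), c ≠ d → f c = f d * X → False := by
    intro c d X hne h
    exact hcross c d (f c) (X * f c) hne (by rw [← mul_assoc, ← h])
  -- prefix case: s = s * (word) impossible
  have hpad : ∀ (s : S) (d : Bool) (l : List Bool), s = s * klaweG f d l → False := by
    intro s d l h
    set e : Bool := !d with he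
    have hed : e ≠ d := by simp [he]
    have h2 : s * f e = s * (klaweG f d l * f e) := by
      rw [← mul_assoc, ← h]
    obtain ⟨t, ht⟩ := hklawe s (f e) (klaweG f d l * f e) h2
    rw [mul_assoc] at ht
    obtain ⟨Z, hZ⟩ := klaweG_factor f d l (f e * t)
    exact hcross e d t Z hed (ht.trans hZ)
  intro x y hxy
  by_contra hne
  -- turn into list inequality
  have hLne : (x.head :: x.tail) ≠ (y.head :: y.tail) := by
    intro hh
    exact hne (FreeSemigroup.ext (by injection hh) (by injection hh))
  have hgx : (FreeSemigroup.lift f : FreeSemigroup Bool →ₙ* S) x = klaweG f x.head x.tail := rfl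
  have hgy : (FreeSemigroup.lift f : FreeSemigroup Bool →ₙ* S) y = klaweG f y.head y.tail := rfl
  have hxy' : klaweG f x.head x.tail = klaweG f y.head y.tail := by
    rw [← hgx, ← hgy]; exact hxy
  obtain ⟨p, s₁, s₂, h1, h2, h3⟩ := klawe_list_decomp (x.head :: x.tail) (y.head :: y.tail) hLne
  rcases h3 with ⟨c, t₁, d, t₂, hs₁, hs₂, hcd⟩ | ⟨hs₁, hs₂⟩ | ⟨hs₁, hs₂⟩
  · -- heads differ after common prefix
    subst hs₁ hs₂
    cases p with
    | nil =>
      simp only [List.nil_append] at h1 h2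
      have hc : x.head = c := by injection h1
      have ht1 : x.tail = t₁ := by injection h1
      have hd : y.head = d := by injection h2
      have ht2 : y.tail = t₂ := by injection h2
      rw [hc, ht1, hd, ht2] at hxy'
      cases t₁ with
      | nil =>
        cases t₂ with
        | nil => exact heq c d hcd hxy'
        | cons d₂ m₂ =>
          rw [klaweG_nil, klaweG_cons] at hxy'
          exact hsingle c d (klaweG f d₂ m₂) hcd hxy'
      | cons c₂ m₁ =>
        cases t₂ with
        | nil =>
          rw [klaweG_cons, klaweG_nil] at hxy'
          exact hsingle d c (klaweG f c₂ m₁) (Ne.symm hcd) hxy'.symm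
        | cons d₂ m₂ =>
          rw [klaweG_cons, klaweG_cons] at hxy'
          exact hcross c d _ _ hcd hxy'
    | cons e p' =>
      rw [List.cons_append] at h1 h2
      have hc : x.head = e := by injection h1
      have ht1 : x.tail = p' ++ c :: t₁ := by injection h1
      have hd : y.head = e := by injection h2
      have ht2 : y.tail = p' ++ d :: t₂ := by injection h2
      rw [hc, ht1] at hxy'
      rw [hd, ht2] at hxy'
      rw [klaweG_append, klaweG_append] at hxy'
      obtain ⟨t, ht⟩ := hklawe _ _ _ hxy'
      obtain ⟨Z₁, hZ₁⟩ := klaweG_factor f c t₁ t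
      obtain ⟨Z₂, hZ₂⟩ := klaweG_factor f d t₂ t
      exact hcross c d Z₁ Z₂ hcd (hZ₁.symm.trans (ht.trans hZ₂))
  · -- x is a strict prefix of y
    subst hs₁
    rw [List.append_nil] at h1
    cases s₂ with
    | nil => exact hs₂ rfl
    | cons d t₂ =>
      rw [← h1] at h2
      have hd : y.head = x.head := by injection h2
      have ht : y.tail = x.tail ++ d :: t₂ := by injection h2
      rw [hd, ht, klaweG_append] at hxy'
      exact hpad _ d t₂ hxy'
  · -- y is a strict prefix of x
    subst hs₂
    rw [List.append_nil] at h2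
    cases s₁ with
    | nil => exact hs₁ rfl
    | cons c t₁ =>
      rw [← h2] at h1
      have hc : x.head = y.head := by injection h1
      have ht : x.tail = y.tail ++ c :: t₁ := by injection h1
      rw [hc, ht, klaweG_append] at hxy'
      exact hpad _ c t₁ hxy'.symm
end

section
/- A semigroup satisfying the Klawe condition either is left reversible or contains a free subsemigroup of rank 2. -/
section KlaweAux

variable {S : Type*} [Semigroup S]

/-- Multiply by an optional element. -/
private def mOpt (s : S) : Option S → S
  | none => s
  | some m => s * m

private lemma mOpt_assoc (s x : S) (m : Option S) :
    mOpt (s * x) m = s * mOpt x m := by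
  cases m <;> simp [mOpt, mul_assoc]

private lemma mOpt_mul (x z : S) (m : Option S) :
    ∃ w : S, mOpt x m * z = x * w := by
  cases m with
  | none => exact ⟨z, rfl⟩
  | some m => exact ⟨m * z, by simp [mOpt, mul_assoc]⟩

/-- Fold a list of booleans into a product, starting from `s`. -/
private def evF (g : Bool → S) (s : S) (l : List Bool) : S :=
  l.foldl (fun x c => x * g c) s

private lemma evF_cons (g : Bool → S) (s : S) (c : Bool) (l : List Bool) :
    evF g s (c :: l) = evF g (s * g c) l := rfl

private lemma evF_form (g : Bool → S) :
    ∀ (l : List Bool) (s : S), ∃ m : Option S, evF g s l = mOpt s m := by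
  intro l
  induction l with
  | nil => exact fun s => ⟨none, rfl⟩
  | cons c l ih =>
    intro s
    obtain ⟨m, hm⟩ := ih (s * g c)
    exact ⟨some (mOpt (g c) m), by rw [evF_cons, hm, mOpt_assoc]; rfl⟩

end KlaweAux

/-- A semigroup satisfying the Klawe condition either is left reversible or
contains a free subsemigroup of rank 2. -/
theorem klawe_dichotomy {S : Type*} [Semigroup S]
    (hklawe : ∀ s x y : S, s * x = s * y → ∃ t : S, x * t = y * t) :
    (∀ a b : S, ∃ u v : S, a * u = b * v) ∨
      ∃ a b : S, Function.Injective
        ⇑(FreeSemigroup.lift (fun c : Bool => if c then a else b) :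
            FreeSemigroup Bool →ₙ* S) := by
  by_cases hrev : ∀ a b : S, ∃ u v : S, a * u = b * v
  · exact Or.inl hrev
  push_neg at hrev
  obtain ⟨a, b, hab⟩ := hrev
  right
  -- the generators are `a*a` and `a*b`
  refine ⟨a * a, a * b, ?_⟩
  set ev : Bool → S := fun c : Bool => if c then a * a else a * b with hev
  have hevt : ev true = a * a := rfl
  have hevf : ev false = a * b := rfl
  -- core: elements of the form `s * (a * _)` and `s * (b * _)` are distinct
  have hcore : ∀ (s : S) (p q : Option S), s * mOpt a p ≠ s * mOpt b q := by
    intro s p q h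
    obtain ⟨t, ht⟩ := hklawe s _ _ h
    cases p <;> cases q <;> simp only [mOpt, mul_assoc] at ht <;> exact hab _ _ ht
  -- mismatching first letters after a common prefix `q`
  have hmismatch : ∀ (q : S) (u v : List Bool),
      evF ev (q * ev true) u ≠ evF ev (q * ev false) v := by
    intro q u v h
    obtain ⟨m₁, h₁⟩ := evF_form ev u (q * ev true)
    obtain ⟨m₂, h₂⟩ := evF_form ev v (q * ev false)
    rw [h₁, h₂] at h
    have e₁ : mOpt (q * ev true) m₁ = (q * a) * mOpt a m₁ := by
      rw [hevt, ← mul_assoc, mOpt_assoc]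
    have e₂ : mOpt (q * ev false) m₂ = (q * a) * mOpt b m₂ := by
      rw [hevf, ← mul_assoc, mOpt_assoc]
    rw [e₁, e₂] at h
    exact hcore (q * a) m₁ m₂ h
  -- mismatching first letters with no common prefix
  have hmismatch0 : ∀ (u v : List Bool),
      evF ev (ev true) u ≠ evF ev (ev false) v := by
    intro u v h
    obtain ⟨m₁, h₁⟩ := evF_form ev u (ev true)
    obtain ⟨m₂, h₂⟩ := evF_form ev v (ev false)
    rw [h₁, h₂] at h
    rw [hevt, mOpt_assoc] at h
    rw [hevf, mOpt_assoc] at h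
    exact hcore a m₁ m₂ h
  -- pumping: no element is fixed by right multiplication by a word
  have hpump : ∀ (s : S) (c : Bool) (l : List Bool), s ≠ evF ev (s * ev c) l := by
    intro s c l h
    obtain ⟨m, hm⟩ := evF_form ev l (s * ev c)
    rw [hm] at h
    cases c with
    | true =>
      rw [hevt, ← mul_assoc, mOpt_assoc] at h
      -- h : s = (s * a) * mOpt a m
      have h2 : s * (a * b) = ((s * a) * mOpt a m) * (a * b) := by rw [← h]
      obtain ⟨w, hw⟩ := mOpt_mul a (a * b) m
      rw [mul_assoc, hw, ← mul_assoc] at h2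
      -- h2 : (s * a) * b = (s * a) * (a * w)
      exact hcore (s * a) (some w) none h2.symm
    | false =>
      rw [hevf, ← mul_assoc, mOpt_assoc] at h
      have h2 : s * (a * a) = ((s * a) * mOpt b m) * (a * a) := by rw [← h]
      obtain ⟨w, hw⟩ := mOpt_mul b (a * a) m
      rw [mul_assoc, hw, ← mul_assoc] at h2
      -- h2 : (s * a) * a = (s * a) * (b * w)
      exact hcore (s * a) none (some w) h2
  -- main cancellation induction
  have hmain : ∀ (l₁ l₂ : List Bool) (s : S), evF ev s l₁ = evF ev s l₂ → l₁ = l₂ := by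
    intro l₁
    induction l₁ with
    | nil =>
      intro l₂ s h
      cases l₂ with
      | nil => rfl
      | cons c l => exact absurd (by rw [evF_cons] at h; exact h) (hpump s c l)
    | cons c₁ l₁ ih =>
      intro l₂ s h
      cases l₂ with
      | nil =>
        rw [evF_cons] at h
        exact absurd h.symm (hpump s c₁ l₁)
      | cons c₂ l₂ =>
        rw [evF_cons, evF_cons] at h
        by_cases hc : c₁ = c₂
        · subst hc
          rw [ih l₂ (s * ev c₁) h]
        · cases c₁ <;> cases c₂ <;> simp at hc
          · exact absurd h.symm (hmismatch s l₂ l₁)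
          · exact absurd h (hmismatch s l₁ l₂)
  -- top-level: compare heads first
  have hfinal : ∀ (h₁ h₂ : Bool) (t₁ t₂ : List Bool),
      evF ev (ev h₁) t₁ = evF ev (ev h₂) t₂ → h₁ = h₂ ∧ t₁ = t₂ := by
    intro h₁ h₂ t₁ t₂ h
    by_cases hh : h₁ = h₂
    · subst hh
      exact ⟨rfl, hmain t₁ t₂ (ev h₁) h⟩
    · cases h₁ <;> cases h₂ <;> simp at hh
      · exact absurd h.symm (hmismatch0 t₂ t₁)
      · exact absurd h (hmismatch0 t₁ t₂)
  -- conclude injectivity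
  intro x y hxy
  have hx : (FreeSemigroup.lift (fun c : Bool => if c then a * a else a * b)) x
      = evF ev (ev x.head) x.tail := rfl
  have hy : (FreeSemigroup.lift (fun c : Bool => if c then a * a else a * b)) y
      = evF ev (ev y.head) y.tail := rfl
  have h := hfinal x.head y.head x.tail y.tail (by rw [← hx, ← hy]; exact hxy)
  exact FreeSemigroup.ext h.1 h.2
end

section
/- Let S be a semigroup generated by a finite set X, and let Γ be the left Cayley graph of S with respect to X (vertices S, directed edge from s to t iff xs = t for some x ∈ X). Then S satisfies the Følner condition FC if and only if Γ has isoperimetric number zero, i.e., for every ε > 0 there is a nonempty finite set A ⊆ S with |∂A| < ε|A|, where ∂A = {t ∉ A : ∃ a ∈ A, x ∈ X, xa = t}. -/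
/-- The product of the nonempty list `a :: l` in a semigroup. -/
def prodOf {S : Type*} [Semigroup S] : S → List S → S
  | a, [] => a
  | a, b :: l => prodOf (a * b) l

/-!
For a finite set `A`, the displacement `s ↦ |sA \ A|` is subadditive, since
`(ab)A \ A ⊆ a(bA \ A) ∪ (aA \ A)`, and for a generator `x` the set `xA \ A` lies in the
out-boundary `∂A = ⋃_{x ∈ X} (xA \ A)`. Hence `|∂A| ≤ ∑_{x ∈ X} |xA \ A|`, which turns Følner sets
for `X` into sets of small boundary, while conversely a product of `n` generators displaces `A` by
at most `n |∂A|`, so sets of small boundary are Følner sets for any finite `H`.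
-/

theorem prodOf_le_add_sum_map {S M : Type*} [Semigroup S] [AddCommMonoid M] [PartialOrder M]
    [IsOrderedAddMonoid M] {f : S → M} (hf : ∀ a b, f (a * b) ≤ f a + f b) (a : S)
    (l : List S) : f (prodOf a l) ≤ f a + (l.map f).sum := by
  induction l generalizing a with
  | nil => simp [prodOf]
  | cons b l ih =>
    calc f (prodOf a (b :: l)) ≤ f (a * b) + (l.map f).sum := ih (a * b)
      _ ≤ f a + f b + (l.map f).sum := by gcongr; exact hf a b
      _ = f a + ((b :: l).map f).sum := by simp [add_assoc]

namespace Finset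

variable {S : Type*} [Semigroup S] [DecidableEq S]

def outBoundary (X A : Finset S) : Finset S :=
  X.biUnion fun x => A.image (x * ·) \ A

theorem setOf_eq_coe_outBoundary (X A : Finset S) :
    {t : S | t ∉ A ∧ ∃ a ∈ A, ∃ x ∈ X, x * a = t} = ↑(outBoundary X A) := by
  ext t
  simp only [outBoundary, Set.mem_ofPred_eq, coe_biUnion, mem_coe, Set.mem_iUnion, coe_sdiff,
    coe_image, Set.mem_sdiff, Set.mem_image, exists_prop]
  aesop

theorem card_outBoundary_le_sum (X A : Finset S) :
    (outBoundary X A).card ≤ ∑ x ∈ X, (A.image (x * ·) \ A).card :=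
  card_biUnion_le

theorem card_image_mul_sdiff_le_card_outBoundary {X : Finset S} {x : S} (hx : x ∈ X)
    (A : Finset S) : (A.image (x * ·) \ A).card ≤ (outBoundary X A).card :=
  card_le_card (subset_biUnion_of_mem (fun x => A.image (x * ·) \ A) hx)

theorem image_mul_mul_sdiff_subset (A : Finset S) (a b : S) :
    A.image ((a * b) * ·) \ A ⊆ (A.image (b * ·) \ A).image (a * ·) ∪ (A.image (a * ·) \ A) := by
  intro t ht
  obtain ⟨htu, htA⟩ := mem_sdiff.1 ht
  obtain ⟨u, hu, rfl⟩ := mem_image.1 htu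
  rw [mul_assoc] at htA ⊢
  by_cases hbu : b * u ∈ A
  · exact mem_union_right _ (mem_sdiff.2 ⟨mem_image_of_mem _ hbu, htA⟩)
  · exact mem_union_left _ (mem_image_of_mem _ (mem_sdiff.2 ⟨mem_image_of_mem _ hu, hbu⟩))

theorem card_image_mul_mul_sdiff_le (A : Finset S) (a b : S) :
    (A.image ((a * b) * ·) \ A).card ≤ (A.image (a * ·) \ A).card + (A.image (b * ·) \ A).card :=
  calc (A.image ((a * b) * ·) \ A).card
      ≤ ((A.image (b * ·) \ A).image (a * ·)).card + (A.image (a * ·) \ A).card :=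
        (card_le_card (image_mul_mul_sdiff_subset A a b)).trans (card_union_le _ _)
    _ ≤ (A.image (a * ·) \ A).card + (A.image (b * ·) \ A).card := by
        rw [add_comm]; exact Nat.add_le_add_left card_image_le _

theorem card_image_prodOf_sdiff_le {X : Finset S} {a : S} {l : List S} (ha : a ∈ X)
    (hl : ∀ x ∈ l, x ∈ X) (A : Finset S) :
    (A.image (prodOf a l * ·) \ A).card ≤ (l.length + 1) * (outBoundary X A).card := by
  have hsum : (l.map fun s => (A.image (s * ·) \ A).card).sum ≤
      l.length * (outBoundary X A).card := by
    simpa using List.sum_le_card_nsmul (l.map fun s => (A.image (s * ·) \ A).card) _ (by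
      simp only [List.mem_map]
      rintro _ ⟨x, hx, rfl⟩
      exact card_image_mul_sdiff_le_card_outBoundary (hl x hx) A)
  calc (A.image (prodOf a l * ·) \ A).card
      ≤ (A.image (a * ·) \ A).card + (l.map fun s => (A.image (s * ·) \ A).card).sum :=
        prodOf_le_add_sum_map (f := fun s => (A.image (s * ·) \ A).card)
          (card_image_mul_mul_sdiff_le A) a l
    _ ≤ (outBoundary X A).card + l.length * (outBoundary X A).card :=
        add_le_add (card_image_mul_sdiff_le_card_outBoundary ha A) hsum
    _ = (l.length + 1) * (outBoundary X A).card := by ring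

theorem exists_forall_card_image_mul_sdiff_le {X : Finset S}
    (hgen : ∀ s : S, ∃ (a : S) (l : List S), a ∈ X ∧ (∀ x ∈ l, x ∈ X) ∧ s = prodOf a l)
    (H : Finset S) :
    ∃ N : ℕ, ∀ A : Finset S, ∀ s ∈ H, (A.image (s * ·) \ A).card ≤ N * (outBoundary X A).card := by
  choose a l ha hl hprod using hgen
  refine ⟨H.sup fun s => (l s).length + 1, fun A s hs => ?_⟩
  calc (A.image (s * ·) \ A).card ≤ ((l s).length + 1) * (outBoundary X A).card := by
        simpa only [← hprod s] using card_image_prodOf_sdiff_le (ha s) (hl s) A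
    _ ≤ _ := by gcongr; exact le_sup (f := fun s => (l s).length + 1) hs

end Finset

open Finset in
/-- A semigroup generated by a finite set `X` satisfies FC iff its left Cayley
graph (edge `s → t` iff `x * s = t` for some `x ∈ X`) has isoperimetric
number zero. -/
theorem fc_iff_isoperimetric_zero {S : Type*} [Semigroup S] [DecidableEq S]
    (X : Finset S)
    (hgen : ∀ s : S, ∃ (a : S) (l : List S), a ∈ X ∧ (∀ x ∈ l, x ∈ X) ∧ s = prodOf a l) :
    (∀ H : Finset S, ∀ ε : ℝ, 0 < ε → ∃ F : Finset S, F.Nonempty ∧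
        ∀ s ∈ H, ((F.image (s * ·) \ F).card : ℝ) ≤ ε * F.card) ↔
      (∀ ε : ℝ, 0 < ε → ∃ A : Finset S, A.Nonempty ∧
        (({t : S | t ∉ A ∧ ∃ a ∈ A, ∃ x ∈ X, x * a = t}).ncard : ℝ) < ε * A.card) := by
  simp only [setOf_eq_coe_outBoundary, Set.ncard_coe_finset]
  constructor
  · intro hFC ε hε
    obtain ⟨F, hF, hFX⟩ := hFC X (ε / (X.card + 1)) (by positivity)
    have hFpos : (0 : ℝ) < F.card := by exact_mod_cast hF.card_pos
    refine ⟨F, hF, ?_⟩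
    calc ((outBoundary X F).card : ℝ) ≤ ∑ x ∈ X, ((F.image (x * ·) \ F).card : ℝ) := by
          exact_mod_cast card_outBoundary_le_sum X F
      _ ≤ ∑ _x ∈ X, ε / (X.card + 1) * F.card := sum_le_sum hFX
      _ = X.card / (X.card + 1) * (ε * F.card) := by rw [sum_const, nsmul_eq_mul]; ring
      _ < ε * F.card := by
          apply mul_lt_of_lt_one_left (by positivity)
          rw [div_lt_one (by positivity)]; linarith
  · intro hIso H ε hε
    obtain ⟨N, hN⟩ := exists_forall_card_image_mul_sdiff_le hgen H
    obtain ⟨A, hA, hAε⟩ := hIso (ε / (N + 1)) (by positivity)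
    refine ⟨A, hA, fun s hs => ?_⟩
    calc ((A.image (s * ·) \ A).card : ℝ) ≤ N * (outBoundary X A).card := by
          exact_mod_cast hN A s hs
      _ ≤ (N + 1) * (outBoundary X A).card := by gcongr; linarith
      _ ≤ (N + 1) * (ε / (N + 1) * A.card) := by gcongr
      _ = ε * A.card := by field_simp
end

section
/- Let Γ and Δ be digraphs of bounded out-degree which are quasi-isometric. Then Γ has isoperimetric number zero if and only if Δ has isoperimetric number zero. -/
open scoped ENNReal

/-- Existence of a directed path of length `n` from `x` to `y` in the digraph
with edge relation `E`. -/
def PathLen {V : Type*} (E : V → V → Prop) : ℕ → V → V → Prop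
  | 0, x, y => x = y
  | n + 1, x, y => ∃ z, E x z ∧ PathLen E n z y

/-- The directed-path semimetric of a digraph, with value `∞` when there is no
directed path. -/
noncomputable def dG {V : Type*} (E : V → V → Prop) (x y : V) : ℝ≥0∞ :=
  sInf {c : ℝ≥0∞ | ∃ n : ℕ, PathLen E n x y ∧ c = (n : ℝ≥0∞)}

/-- A digraph has bounded out-degree. -/
def BoundedOutDegree {V : Type*} (E : V → V → Prop) : Prop :=
  ∃ k : ℕ, ∀ v : V, {w : V | E v w}.encard ≤ (k : ℕ∞)

/-- Two digraphs are quasi-isometric. -/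
def QuasiIsometric {V W : Type*} (EΓ : V → V → Prop) (EΔ : W → W → Prop) : Prop :=
  ∃ l : NNReal, 0 < l ∧ ∃ φ : V → W,
    (∀ x y : V, dG EΓ x y ≤ (l : ℝ≥0∞) * dG EΔ (φ x) (φ y) + l) ∧
    (∀ x y : V, (l : ℝ≥0∞)⁻¹ * dG EΔ (φ x) (φ y) ≤ dG EΓ x y + l) ∧
    (∀ w : W, ∃ x : V, dG EΔ (φ x) w ≤ (l : ℝ≥0∞) ∧ dG EΔ w (φ x) ≤ (l : ℝ≥0∞))

/-- A digraph has isoperimetric number zero. -/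
def IsoperimetricZero {V : Type*} (E : V → V → Prop) : Prop :=
  ∀ ε : ℝ, 0 < ε → ∃ A : Set V, A.Finite ∧ A.Nonempty ∧
    (({x : V | x ∉ A ∧ ∃ y ∈ A, E y x}).ncard : ℝ) < ε * A.ncard

/-!
Let `φ` be a quasi-isometry with constant `L`, and let `A` be a finite set of vertices of `Γ`
with small out-boundary. Take `B` to be the `L`-neighbourhood of `φ A`. Bounded out-degree makes
every `r`-neighbourhood at most `(k + 1) ^ r` times larger than its centre, and the fibres of `φ`
lie in `L`-balls, so `|A| ≤ C |B|`. A vertex of `∂B` is `L`-close to the image of a vertex at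
distance at most `R = L (2L + 1) + L` from `A` but outside `A`, and every such vertex is within
distance `R` of `∂A`; hence `|∂B| ≤ C' |∂A|`. Since quasi-isometry is symmetric, the two
implications are the same statement.
-/

section PathLen

variable {V : Type*} {E : V → V → Prop} {x y z : V} {m n : ℕ}

lemma PathLen.append (h₁ : PathLen E m x y) (h₂ : PathLen E n y z) :
    PathLen E (m + n) x z := by
  induction m generalizing x with
  | zero => rw [zero_add]; exact (h₁ : x = y) ▸ h₂
  | succ m ih =>
    obtain ⟨w, hxw, hw⟩ := h₁
    rw [Nat.succ_add]
    exact ⟨w, hxw, ih hw⟩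

lemma dG_le_of_pathLen (h : PathLen E n x y) : dG E x y ≤ n :=
  sInf_le ⟨n, h, rfl⟩

lemma dG_le_one_of_adj (h : E x y) : dG E x y ≤ 1 := by
  simpa using dG_le_of_pathLen (n := 1) ⟨y, h, rfl⟩

lemma dG_self (x : V) : dG E x x = 0 := by
  simpa using dG_le_of_pathLen (E := E) (n := 0) (rfl : x = x)

lemma exists_pathLen_of_dG_ne_top (h : dG E x y ≠ ⊤) :
    ∃ n, PathLen E n x y ∧ dG E x y = n := by
  classical
  have hex : ∃ n, PathLen E n x y := by
    by_contra! hne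
    exact h (by simp [dG, hne])
  refine ⟨Nat.find hex, Nat.find_spec hex,
    le_antisymm (dG_le_of_pathLen (Nat.find_spec hex)) (le_sInf ?_)⟩
  rintro _ ⟨m, hm, rfl⟩
  exact_mod_cast Nat.find_min' hex hm

lemma dG_le_natCast_iff : dG E x y ≤ n ↔ ∃ m ≤ n, PathLen E m x y := by
  refine ⟨fun h ↦ ?_, fun ⟨m, hmn, hm⟩ ↦ ?_⟩
  · obtain ⟨m, hm, hd⟩ := exists_pathLen_of_dG_ne_top (ne_top_of_le_ne_top (by simp) h)
    exact ⟨m, by exact_mod_cast hd ▸ h, hm⟩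
  · exact (dG_le_of_pathLen hm).trans (by exact_mod_cast hmn)

lemma dG_triangle (x y z : V) : dG E x z ≤ dG E x y + dG E y z := by
  rcases eq_or_ne (dG E x y) ⊤ with h | h
  · simp [h]
  rcases eq_or_ne (dG E y z) ⊤ with h' | h'
  · simp [h']
  obtain ⟨m, hm, hxy⟩ := exists_pathLen_of_dG_ne_top h
  obtain ⟨n, hn, hyz⟩ := exists_pathLen_of_dG_ne_top h'
  rw [hxy, hyz, ← Nat.cast_add]
  exact dG_le_of_pathLen (hm.append hn)

lemma dG_triangle₃ (x y z w : V) : dG E x w ≤ dG E x y + dG E y z + dG E z w :=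
  (dG_triangle x z w).trans (add_le_add_left (dG_triangle x y z) _)

end PathLen

lemma Set.Finite.encard_biUnion_le_mul {ι α : Type*} {t : Set ι} (ht : t.Finite)
    {s : ι → Set α} {c : ℕ∞} (hs : ∀ i ∈ t, (s i).encard ≤ c) :
    (⋃ i ∈ t, s i).encard ≤ c * t.encard := by
  calc (⋃ i ∈ t, s i).encard ≤ ∑ i ∈ ht.toFinset, (s i).encard := by
        simpa using ht.toFinset.set_encard_biUnion_le s
    _ ≤ ht.toFinset.card • c := Finset.sum_le_card_nsmul _ _ _ (by simpa using hs)
    _ = c * t.encard := by rw [ht.encard_eq_coe_toFinset_card, nsmul_eq_mul, mul_comm]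

lemma Set.ncard_le_mul_ncard_of_encard_le {α β : Type*} {s : Set α} {t : Set β} (ht : t.Finite)
    {c : ℕ} (h : s.encard ≤ c * t.encard) : s.ncard ≤ c * t.ncard := by
  rw [← ht.cast_ncard_eq, ← Nat.cast_mul] at h
  exact (Set.encard_le_coe_iff_finite_ncard_le.mp h).2

def outNbhd {V : Type*} (E : V → V → Prop) (n : ℕ) (A : Set V) : Set V :=
  {y | ∃ a ∈ A, dG E a y ≤ n}

def outBoundary {V : Type*} (E : V → V → Prop) (A : Set V) : Set V :=
  {x | x ∉ A ∧ ∃ y ∈ A, E y x}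

section Counting

variable {V : Type*} {E : V → V → Prop} {A : Set V} {k n : ℕ}

lemma subset_outNbhd (n : ℕ) : A ⊆ outNbhd E n A :=
  fun a ha ↦ ⟨a, ha, by simp [dG_self]⟩

lemma outBoundary_subset_outNbhd_one : outBoundary E A ⊆ outNbhd E 1 A :=
  fun _ ⟨_, y, hy, hyx⟩ ↦ ⟨y, hy, by simpa using dG_le_one_of_adj hyx⟩

@[simp]
lemma outNbhd_zero : outNbhd E 0 A = A := by
  refine Set.Subset.antisymm ?_ (subset_outNbhd 0)
  rintro y ⟨a, ha, hay⟩
  obtain ⟨m, hm, hp⟩ := dG_le_natCast_iff.mp hay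
  rw [Nat.le_zero.mp hm] at hp
  exact (hp : a = y) ▸ ha

lemma outNbhd_one_subset : outNbhd E 1 A ⊆ ⋃ a ∈ A, insert a {y | E a y} := by
  rintro y ⟨a, ha, hay⟩
  obtain ⟨m, hm, hp⟩ := dG_le_natCast_iff.mp hay
  refine Set.mem_biUnion ha ?_
  interval_cases m
  · exact Or.inl (hp : a = y).symm
  · obtain ⟨z, haz, rfl : z = y⟩ := hp
    exact Or.inr haz

lemma outNbhd_succ_subset : outNbhd E (n + 1) A ⊆ outNbhd E n (outNbhd E 1 A) := by
  rintro y ⟨a, ha, hay⟩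
  obtain ⟨m, hm, hp⟩ := dG_le_natCast_iff.mp hay
  cases m with
  | zero =>
    exact ⟨a, subset_outNbhd 1 ha, by rw [show a = y from hp, dG_self]; exact zero_le⟩
  | succ m =>
    obtain ⟨z, haz, hzy⟩ := hp
    exact ⟨z, ⟨a, ha, by simpa using dG_le_one_of_adj haz⟩,
      dG_le_natCast_iff.mpr ⟨m, by omega, hzy⟩⟩

variable (hk : ∀ v, {w | E v w}.encard ≤ k)
include hk

lemma encard_outNbhd_one_le : (outNbhd E 1 A).encard ≤ (k + 1) * A.encard := by
  rcases A.finite_or_infinite with hA | hA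
  · refine (Set.encard_le_encard outNbhd_one_subset).trans
      (hA.encard_biUnion_le_mul fun a _ ↦ ?_)
    exact (Set.encard_insert_le _ _).trans (add_le_add_left (hk a) 1)
  · simp [hA.encard_eq]

lemma encard_outNbhd_le (n : ℕ) (A : Set V) :
    (outNbhd E n A).encard ≤ (k + 1) ^ n * A.encard := by
  induction n generalizing A with
  | zero => simp
  | succ n ih =>
    calc (outNbhd E (n + 1) A).encard ≤ (outNbhd E n (outNbhd E 1 A)).encard :=
          Set.encard_le_encard outNbhd_succ_subset
      _ ≤ (k + 1) ^ n * ((k + 1) * A.encard) := by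
          grw [ih, encard_outNbhd_one_le hk]
      _ = (k + 1) ^ (n + 1) * A.encard := by ring

lemma Set.Finite.outNbhd (hA : A.Finite) (n : ℕ) : (outNbhd E n A).Finite := by
  rw [← Set.encard_lt_top_iff] at hA ⊢
  refine (encard_outNbhd_le hk n A).trans_lt (WithTop.mul_lt_top ?_ hA)
  exact_mod_cast ENat.natCast_lt_top ((k + 1) ^ n)

lemma Set.Finite.outBoundary (hA : A.Finite) : (outBoundary E A).Finite :=
  (hA.outNbhd hk 1).subset outBoundary_subset_outNbhd_one

end Counting

section Boundary

variable {V : Type*} {E : V → V → Prop} {A : Set V} {a y : V} {m n : ℕ}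

lemma PathLen.exists_mem_outBoundary (ha : a ∈ A) (hy : y ∉ A) (hp : PathLen E m a y) :
    ∃ b ∈ outBoundary E A, ∃ j < m, PathLen E j b y := by
  induction m generalizing a with
  | zero => exact absurd ((show a = y from hp) ▸ ha) hy
  | succ m ih =>
    obtain ⟨z, haz, hzy⟩ := hp
    by_cases hz : z ∈ A
    · obtain ⟨b, hb, j, hj, hby⟩ := ih hz hzy
      exact ⟨b, hb, j, by omega, hby⟩
    · exact ⟨z, ⟨hz, a, ha, haz⟩, m, by omega, hzy⟩

lemma outNbhd_diff_subset_outNbhd_outBoundary :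
    outNbhd E n A \ A ⊆ outNbhd E n (outBoundary E A) := by
  rintro y ⟨⟨a, ha, hay⟩, hy⟩
  obtain ⟨m, hm, hp⟩ := dG_le_natCast_iff.mp hay
  obtain ⟨b, hb, j, hj, hby⟩ := hp.exists_mem_outBoundary ha hy
  exact ⟨b, hb, dG_le_natCast_iff.mpr ⟨j, by omega, hby⟩⟩

end Boundary

section Transfer

variable {V W : Type*} {EΓ : V → V → Prop} {EΔ : W → W → Prop} {φ : V → W} {L k : ℕ}
  (hup : ∀ x y, dG EΓ x y ≤ L * dG EΔ (φ x) (φ y) + L)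
include hup

lemma preimage_singleton_subset_outNbhd (a : V) : φ ⁻¹' {φ a} ⊆ outNbhd EΓ L {a} := by
  intro x (hx : φ x = φ a)
  refine ⟨a, rfl, ?_⟩
  simpa [hx, dG_self] using hup a x

lemma encard_le_mul_encard_image (hk : ∀ v, {w | EΓ v w}.encard ≤ k) {A : Set V}
    (hA : A.Finite) : A.encard ≤ (k + 1) ^ L * (φ '' A).encard := by
  have hcover : A ⊆ ⋃ w ∈ φ '' A, φ ⁻¹' {w} :=
    fun a ha ↦ Set.mem_biUnion ⟨a, ha, rfl⟩ rfl
  refine (Set.encard_le_encard hcover).trans ((hA.image φ).encard_biUnion_le_mul ?_)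
  rintro _ ⟨a, -, rfl⟩
  calc (φ ⁻¹' {φ a}).encard ≤ (outNbhd EΓ L {a}).encard :=
        Set.encard_le_encard (preimage_singleton_subset_outNbhd hup a)
    _ ≤ (k + 1) ^ L := by simpa using encard_outNbhd_le hk L {a}

lemma outBoundary_outNbhd_image_subset
    (hnear : ∀ w, ∃ x, dG EΔ (φ x) w ≤ L ∧ dG EΔ w (φ x) ≤ L) (A : Set V) :
    outBoundary EΔ (outNbhd EΔ L (φ '' A)) ⊆
      outNbhd EΔ L (φ '' (outNbhd EΓ (L * (2 * L + 1) + L) A \ A)) := by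
  rintro w ⟨hw, u, ⟨_, ⟨a, ha, rfl⟩, hau⟩, huw⟩
  obtain ⟨x, hxw, hwx⟩ := hnear w
  have hax : dG EΔ (φ a) (φ x) ≤ (2 * L + 1 : ℕ) := calc
    dG EΔ (φ a) (φ x) ≤ dG EΔ (φ a) u + dG EΔ u w + dG EΔ w (φ x) :=
      dG_triangle₃ _ _ _ _
    _ ≤ L + 1 + L := by gcongr; exact dG_le_one_of_adj huw
    _ = (2 * L + 1 : ℕ) := by push_cast; ring
  have hx : x ∉ A := fun hx ↦ hw ⟨φ x, ⟨x, hx, rfl⟩, hxw⟩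
  refine ⟨φ x, ⟨x, ⟨⟨a, ha, ?_⟩, hx⟩, rfl⟩, hxw⟩
  calc dG EΓ a x ≤ L * dG EΔ (φ a) (φ x) + L := hup a x
    _ ≤ L * (2 * L + 1 : ℕ) + L := by gcongr
    _ = (L * (2 * L + 1) + L : ℕ) := by push_cast; ring

end Transfer

/-- `hfin` is what lets the `encard` bounds pass to `ncard`, which is `0` on infinite sets. -/
lemma IsoperimetricZero.of_comparison {V W : Type*} {EΓ : V → V → Prop}
    {EΔ : W → W → Prop} (c d : ℕ)
    (hfin : ∀ A : Set V, A.Finite → (outBoundary EΓ A).Finite)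
    (hcomp : ∀ A : Set V, A.Finite → A.Nonempty → ∃ B : Set W, B.Finite ∧ B.Nonempty ∧
      A.encard ≤ c * B.encard ∧ (outBoundary EΔ B).encard ≤ d * (outBoundary EΓ A).encard)
    (h : IsoperimetricZero EΓ) : IsoperimetricZero EΔ := by
  intro ε hε
  obtain ⟨A, hA, hAne, hAε⟩ := h (ε / (c * d + 1)) (by positivity)
  obtain ⟨B, hB, hBne, hAB, hbdry⟩ := hcomp A hA hAne
  have hAB' : (A.ncard : ℝ) ≤ c * B.ncard := by
    exact_mod_cast Set.ncard_le_mul_ncard_of_encard_le hB hAB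
  have hbdry' : ((outBoundary EΔ B).ncard : ℝ) ≤ d * (outBoundary EΓ A).ncard := by
    exact_mod_cast Set.ncard_le_mul_ncard_of_encard_le (hfin A hA) hbdry
  have hBpos : (0 : ℝ) < B.ncard := by exact_mod_cast (Set.ncard_pos hB).mpr hBne
  refine ⟨B, hB, hBne, ?_⟩
  calc ((outBoundary EΔ B).ncard : ℝ) ≤ d * (outBoundary EΓ A).ncard := hbdry'
    _ ≤ d * (ε / (c * d + 1) * A.ncard) := by gcongr; exact hAε.le
    _ ≤ d * (ε / (c * d + 1) * (c * B.ncard)) := by gcongr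
    _ = (c * d) / (c * d + 1) * (ε * B.ncard) := by ring
    _ < ε * B.ncard := by
      refine mul_lt_of_lt_one_left (by positivity) ?_
      rw [div_lt_one (by positivity)]
      linarith

theorem IsoperimetricZero.of_coarselySurjective {V W : Type*} {EΓ : V → V → Prop}
    {EΔ : W → W → Prop} {φ : V → W} {L : ℕ}
    (hΓ : BoundedOutDegree EΓ) (hΔ : BoundedOutDegree EΔ)
    (hup : ∀ x y, dG EΓ x y ≤ L * dG EΔ (φ x) (φ y) + L)
    (hnear : ∀ w, ∃ x, dG EΔ (φ x) w ≤ L ∧ dG EΔ w (φ x) ≤ L)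
    (h : IsoperimetricZero EΓ) : IsoperimetricZero EΔ := by
  obtain ⟨kΓ, hkΓ⟩ := hΓ
  obtain ⟨kΔ, hkΔ⟩ := hΔ
  set R := L * (2 * L + 1) + L
  refine h.of_comparison ((kΓ + 1) ^ L) ((kΔ + 1) ^ L * (kΓ + 1) ^ R)
    (fun A hA ↦ hA.outBoundary hkΓ) fun A hA hAne ↦ ?_
  refine ⟨outNbhd EΔ L (φ '' A), (hA.image φ).outNbhd hkΔ L,
    (hAne.image φ).mono (subset_outNbhd L), ?_, ?_⟩
  · calc A.encard ≤ (kΓ + 1) ^ L * (φ '' A).encard := encard_le_mul_encard_image hup hkΓ hA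
      _ ≤ (kΓ + 1) ^ L * (outNbhd EΔ L (φ '' A)).encard := by
        gcongr; exact subset_outNbhd L
      _ = _ := by push_cast; ring
  · calc (outBoundary EΔ (outNbhd EΔ L (φ '' A))).encard
        ≤ (outNbhd EΔ L (φ '' (outNbhd EΓ R A \ A))).encard :=
          Set.encard_le_encard (outBoundary_outNbhd_image_subset hup hnear A)
      _ ≤ (kΔ + 1) ^ L * (φ '' (outNbhd EΓ R A \ A)).encard := encard_outNbhd_le hkΔ L _
      _ ≤ (kΔ + 1) ^ L * (outNbhd EΓ R (outBoundary EΓ A)).encard := by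
        gcongr
        exact (Set.encard_image_le _ _).trans
          (Set.encard_le_encard outNbhd_diff_subset_outNbhd_outBoundary)
      _ ≤ (kΔ + 1) ^ L * ((kΓ + 1) ^ R * (outBoundary EΓ A).encard) := by
        gcongr; exact encard_outNbhd_le hkΓ R _
      _ = _ := by push_cast; ring

/-- `QuasiIsometric` with a natural constant and the lower bound solved for `dG EΔ`, a form
in which the relation is visibly symmetric. -/
structure IsQuasiIsometryWith {V W : Type*} (EΓ : V → V → Prop) (EΔ : W → W → Prop)
    (L : ℕ) (φ : V → W) : Prop where
  dG_le : ∀ x y, dG EΓ x y ≤ L * dG EΔ (φ x) (φ y) + L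
  dG_map_le : ∀ x y, dG EΔ (φ x) (φ y) ≤ L * dG EΓ x y + L
  exists_near : ∀ w, ∃ x, dG EΔ (φ x) w ≤ L ∧ dG EΔ w (φ x) ≤ L

section QuasiIsometry

variable {V W : Type*} {EΓ : V → V → Prop} {EΔ : W → W → Prop}

lemma QuasiIsometric.exists_isQuasiIsometryWith (h : QuasiIsometric EΓ EΔ) :
    ∃ L φ, IsQuasiIsometryWith EΓ EΔ L φ := by
  obtain ⟨l, hl, φ, hup, hlow, hnear⟩ := h
  set L := ⌈l + l * l⌉₊
  have hceil : ((l + l * l : NNReal) : ℝ≥0∞) ≤ L := by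
    rw [← ENNReal.coe_natCast]
    exact ENNReal.coe_le_coe.mpr (Nat.le_ceil _)
  push_cast at hceil
  have hlL : (l : ℝ≥0∞) ≤ L := le_self_add.trans hceil
  refine ⟨L, φ, fun x y ↦ (hup x y).trans (by gcongr), fun x y ↦ ?_,
    fun w ↦ (hnear w).imp fun x hx ↦ ⟨hx.1.trans hlL, hx.2.trans hlL⟩⟩
  calc dG EΔ (φ x) (φ y) = l * ((l : ℝ≥0∞)⁻¹ * dG EΔ (φ x) (φ y)) := by
        rw [← mul_assoc, ENNReal.mul_inv_cancel (by simpa using hl.ne') ENNReal.coe_ne_top,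
          one_mul]
    _ ≤ l * (dG EΓ x y + l) := by gcongr; exact hlow x y
    _ = l * dG EΓ x y + l * l := mul_add _ _ _
    _ ≤ L * dG EΓ x y + L := by gcongr; exact le_add_self.trans hceil

lemma IsQuasiIsometryWith.symm {L : ℕ} {φ : V → W} (h : IsQuasiIsometryWith EΓ EΔ L φ) :
    ∃ ψ, IsQuasiIsometryWith EΔ EΓ (L * (2 * L + 3)) ψ := by
  choose ψ hφψ hψφ using h.exists_near
  have hnear (x : V) : dG EΓ (ψ (φ x)) x ≤ (L * L + L : ℕ) ∧
      dG EΓ x (ψ (φ x)) ≤ (L * L + L : ℕ) := by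
    constructor
    · calc dG EΓ (ψ (φ x)) x ≤ L * dG EΔ (φ (ψ (φ x))) (φ x) + L := h.dG_le _ _
        _ ≤ L * L + L := by gcongr; exact hφψ _
        _ = (L * L + L : ℕ) := by push_cast; ring
    · calc dG EΓ x (ψ (φ x)) ≤ L * dG EΔ (φ x) (φ (ψ (φ x))) + L := h.dG_le _ _
        _ ≤ L * L + L := by gcongr; exact hψφ _
        _ = (L * L + L : ℕ) := by push_cast; ring
  refine ⟨ψ, ⟨fun w w' ↦ ?_, fun w w' ↦ ?_, fun x ↦ ⟨φ x, ?_⟩⟩⟩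
  · calc dG EΔ w w'
        ≤ dG EΔ w (φ (ψ w)) + dG EΔ (φ (ψ w)) (φ (ψ w')) + dG EΔ (φ (ψ w')) w' :=
          dG_triangle₃ _ _ _ _
      _ ≤ L + (L * dG EΓ (ψ w) (ψ w') + L) + L := by
          gcongr
          exacts [hψφ w, h.dG_map_le _ _, hφψ w']
      _ = L * dG EΓ (ψ w) (ψ w') + (3 * L : ℕ) := by push_cast; ring
      _ ≤ _ := by gcongr ?_ * _ + ?_ <;> exact_mod_cast (by nlinarith)
  · calc dG EΓ (ψ w) (ψ w') ≤ L * dG EΔ (φ (ψ w)) (φ (ψ w')) + L := h.dG_le _ _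
      _ ≤ L * (dG EΔ (φ (ψ w)) w + dG EΔ w w' + dG EΔ w' (φ (ψ w'))) + L := by
          gcongr; exact dG_triangle₃ _ _ _ _
      _ ≤ L * (L + dG EΔ w w' + L) + L := by
          gcongr
          exacts [hφψ w, hψφ w']
      _ = L * dG EΔ w w' + (2 * L * L + L : ℕ) := by push_cast; ring
      _ ≤ _ := by gcongr ?_ * _ + ?_ <;> exact_mod_cast (by nlinarith)
  · have hL : ((L * L + L : ℕ) : ℝ≥0∞) ≤ (L * (2 * L + 3) : ℕ) := by
      exact_mod_cast (by nlinarith)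
    exact ⟨(hnear x).1.trans hL, (hnear x).2.trans hL⟩

end QuasiIsometry

/-- Having isoperimetric number zero is a quasi-isometry invariant of digraphs
of bounded out-degree. -/
theorem isoperimetricZero_qi_invariant {V W : Type*}
    (EΓ : V → V → Prop) (EΔ : W → W → Prop)
    (hΓ : BoundedOutDegree EΓ) (hΔ : BoundedOutDegree EΔ)
    (hqi : QuasiIsometric EΓ EΔ) :
    IsoperimetricZero EΓ ↔ IsoperimetricZero EΔ := by
  obtain ⟨L, φ, hφ⟩ := hqi.exists_isQuasiIsometryWith
  obtain ⟨ψ, hψ⟩ := hφ.symm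
  exact ⟨.of_coarselySurjective hΓ hΔ hφ.dG_le hφ.exists_near,
    .of_coarselySurjective hΔ hΓ hψ.dG_le hψ.exists_near⟩
end
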